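/- arXiv:2005.09204 — 7 statements merged into one kernel-verified Lean document; each statement's English description precedes it below -/
import Mathlib

section
/- If (T, J) and (T, J') are both pairs of subsets of ℕ^n such that T ⊕ J = ℕ^n and T ⊕ J' = ℕ^n (direct sums), then J = J'. -/
/-!
As `0 = t + j` forces `t = 0`, we have `0 ∈ T`, so every `x ∈ J` decomposes as `x = 0 + x` in
`T ⊕ J`. If `x` also lies in `T ⊕ J'` as `t + j` with `t ≠ 0`, then `j < x`, so by well-founded
induction `j ∈ J`, and `0 + x = t + j` contradicts uniqueness of decompositions in `T ⊕ J`. Hence `t = 0` and `x = j ∈ J'`.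
-/

open Pointwise

/-- Unique decompositions: every sum `a + b` with `a ∈ A`, `b ∈ B` determines `a` and `b`. -/
def UniqueSumsOn {α : Type*} [Add α] (A B : Set α) : Prop :=
  ∀ a ∈ A, ∀ b ∈ B, ∀ a' ∈ A, ∀ b' ∈ B, a + b = a' + b' → a = a' ∧ b = b'

/-- `C = A ⊕ B`: `C` is the direct sum of `A` and `B`. -/
def IsDirectSum {α : Type*} [Add α] (A B C : Set α) : Prop :=
  C = A + B ∧ UniqueSumsOn A B

section

variable {α : Type*} [AddCommMonoid α] [PartialOrder α] [CanonicallyOrderedAdd α]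

theorem zero_mem_left_of_univ_eq_add {A B : Set α} (hAB : Set.univ = A + B) : (0 : α) ∈ A := by
  obtain ⟨a, ha, b, -, hab⟩ : (0 : α) ∈ A + B := hAB ▸ Set.mem_univ 0
  rwa [(add_eq_zero.mp hab).1] at ha

variable [IsOrderedCancelAddMonoid α]

theorem mem_right_of_forall_lt {T J J' : Set α} (hT : (0 : α) ∈ T) (hU : UniqueSumsOn T J)
    (hJ' : Set.univ = T + J') {x : α} (hx : x ∈ J) (ih : ∀ y < x, y ∈ J' → y ∈ J) : x ∈ J' := by
  obtain ⟨t, ht, j, hj, htj⟩ : x ∈ T + J' := hJ' ▸ Set.mem_univ x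
  subst htj
  obtain rfl | ht0 := eq_or_ne t 0
  · simpa only [zero_add] using hj
  have hjJ : j ∈ J := ih j (lt_add_of_pos_left j (pos_iff_ne_zero.mpr ht0)) hj
  exact absurd (hU 0 hT _ hx t ht j hjJ (zero_add _)).1.symm ht0

theorem IsDirectSum.right_unique [WellFoundedLT α] {T J J' : Set α}
    (h : IsDirectSum T J Set.univ) (h' : IsDirectSum T J' Set.univ) : J = J' := by
  have hT : (0 : α) ∈ T := zero_mem_left_of_univ_eq_add h.1
  ext x
  induction x using WellFoundedLT.induction with
  | _ x ih =>
    exact ⟨fun hx => mem_right_of_forall_lt hT h.2 h'.1 hx fun y hy => (ih y hy).2,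
      fun hx => mem_right_of_forall_lt hT h'.2 h.1 hx fun y hy => (ih y hy).1⟩

end

theorem stmt0 {n : ℕ} (T J J' : Set (Fin n → ℕ))
    (h : IsDirectSum T J Set.univ) (h' : IsDirectSum T J' Set.univ) :
    J = J' :=
  h.right_unique h'
end

section
/- If (T, J) is an ℕ^{n+m}-pair such that T = I₁ × I₂ with I₁ ⊆ ℕ^n and I₂ ⊆ ℕ^m, then J can be written as J₁ × J₂ with J₁ ⊆ ℕ^n and J₂ ⊆ ℕ^m; moreover (I₁, J₁) is an ℕ^n-pair and (I₂, J₂) is an ℕ^m-pair. -/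
/-!
The complement of `I₁ × I₂` is forced to be the product of the two slices
`J₁ = {a | (a, 0) ∈ J}` and `J₂ = {b | (0, b) ∈ J}`. Since sums in `ℕ^k` vanish only
termwise, `0` lies in both summands of any decomposition of `ℕ^k`, and cutting the
decomposition of `ℕ^{n+m}` along `ℕ^n × {0}` and `{0} × ℕ^m` shows that `(I₁, J₁)` and
`(I₂, J₂)` are pairs. Their product `J₁ × J₂` is then a second complement of `I₁ × I₂`,
and complements in `ℕ^k` are unique by well-founded induction: if `z ∈ J` is written as
`t + s` with `t ∈ T`, `s ∈ J'`, `t ≠ 0`, then `s < z`, so `s ∈ J`, and `t + s = 0 + z`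
contradicts uniqueness of decompositions in `T ⊕ J`.
-/

open Pointwise

namespace IsDirectSum

variable {α β : Type*}

theorem exists_add_eq [Add α] {A B : Set α} (h : IsDirectSum A B Set.univ) (x : α) :
    ∃ a ∈ A, ∃ b ∈ B, a + b = x :=
  Set.mem_add.1 (h.1 ▸ Set.mem_univ x)

theorem zero_mem [AddCommMonoid α] [Subsingleton (AddUnits α)] {A B : Set α}
    (h : IsDirectSum A B Set.univ) : (0 : α) ∈ A ∧ (0 : α) ∈ B := by
  obtain ⟨a, ha, b, hb, hab⟩ := h.exists_add_eq 0
  obtain ⟨rfl, rfl⟩ := add_eq_zero.1 hab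
  exact ⟨ha, hb⟩

theorem prod [Add α] [Add β] {A₁ B₁ C₁ : Set α} {A₂ B₂ C₂ : Set β}
    (h₁ : IsDirectSum A₁ B₁ C₁) (h₂ : IsDirectSum A₂ B₂ C₂) :
    IsDirectSum (A₁ ×ˢ A₂) (B₁ ×ˢ B₂) (C₁ ×ˢ C₂) := by
  refine ⟨by rw [Set.prod_add_prod_comm, h₁.1, h₂.1], ?_⟩
  rintro ⟨a₁, a₂⟩ ⟨ha₁, ha₂⟩ ⟨b₁, b₂⟩ ⟨hb₁, hb₂⟩ ⟨a₁', a₂'⟩ ⟨ha₁', ha₂'⟩ ⟨b₁', b₂'⟩ ⟨hb₁', hb₂'⟩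
    hab
  obtain ⟨rfl, rfl⟩ := h₁.2 a₁ ha₁ b₁ hb₁ a₁' ha₁' b₁' hb₁' (congrArg Prod.fst hab)
  obtain ⟨rfl, rfl⟩ := h₂.2 a₂ ha₂ b₂ hb₂ a₂' ha₂' b₂' hb₂' (congrArg Prod.snd hab)
  exact ⟨rfl, rfl⟩

theorem preimage_swap [AddZeroClass α] [AddZeroClass β] {A B C : Set (α × β)}
    (h : IsDirectSum A B C) :
    IsDirectSum (Prod.swap ⁻¹' A) (Prod.swap ⁻¹' B) (Prod.swap ⁻¹' C) := by
  refine ⟨?_, fun a ha b hb a' ha' b' hb' hab => ?_⟩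
  · simp only [← Set.image_swap_eq_preimage_swap, h.1]
    exact Set.image_add (AddEquiv.prodComm : α × β ≃+ β × α)
  · obtain ⟨h₁, h₂⟩ := h.2 a.swap ha b.swap hb a'.swap ha' b'.swap hb' (congrArg Prod.swap hab)
    exact ⟨Prod.swap_injective h₁, Prod.swap_injective h₂⟩

theorem fst_slice [AddCommMonoid α] [AddCommMonoid β] [Subsingleton (AddUnits β)]
    {I₁ : Set α} {I₂ : Set β} {J : Set (α × β)} (h : IsDirectSum (I₁ ×ˢ I₂) J Set.univ)
    (h0 : (0 : β) ∈ I₂) : IsDirectSum I₁ {a | (a, 0) ∈ J} Set.univ := by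
  refine ⟨(Set.eq_univ_of_forall fun x => ?_).symm, fun a ha b hb a' ha' b' hb' hab => ?_⟩
  · obtain ⟨⟨t₁, t₂⟩, ⟨ht₁, -⟩, ⟨s₁, s₂⟩, hs, hts⟩ := h.exists_add_eq (x, 0)
    obtain ⟨-, rfl⟩ := add_eq_zero.1 (congrArg Prod.snd hts)
    exact Set.mem_add.2 ⟨t₁, ht₁, s₁, hs, congrArg Prod.fst hts⟩
  · obtain ⟨h₁, h₂⟩ := h.2 (a, 0) ⟨ha, h0⟩ (b, 0) hb (a', 0) ⟨ha', h0⟩ (b', 0) hb'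
      (Prod.ext hab rfl)
    exact ⟨congrArg Prod.fst h₁, congrArg Prod.fst h₂⟩

theorem snd_slice [AddCommMonoid α] [AddCommMonoid β] [Subsingleton (AddUnits α)]
    {I₁ : Set α} {I₂ : Set β} {J : Set (α × β)} (h : IsDirectSum (I₁ ×ˢ I₂) J Set.univ)
    (h0 : (0 : α) ∈ I₁) : IsDirectSum I₂ {b | (0, b) ∈ J} Set.univ :=
  fst_slice (J := Prod.swap ⁻¹' J)
    (by simpa only [Set.preimage_swap_prod, Set.preimage_univ] using h.preimage_swap) h0

section Unique

variable [AddCommMonoid α] [PartialOrder α] [IsOrderedCancelAddMonoid α] [CanonicallyOrderedAdd α]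
  {T J J' : Set α}

theorem mem_of_forall_lt (hJ : IsDirectSum T J Set.univ) (hJ' : IsDirectSum T J' Set.univ)
    {z : α} (hz : z ∈ J) (ih : ∀ w < z, w ∈ J' → w ∈ J) : z ∈ J' := by
  obtain ⟨t, ht, s, hs, rfl⟩ := hJ'.exists_add_eq z
  obtain rfl | ht0 := eq_or_ne t 0
  · rwa [zero_add]
  · have hsJ : s ∈ J := ih s (lt_add_of_pos_left s (pos_iff_ne_zero.2 ht0)) hs
    exact absurd (hJ.2 t ht s hsJ 0 hJ.zero_mem.1 _ hz (zero_add _).symm).1 ht0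

theorem right_unique_s2 [WellFoundedLT α] (hJ : IsDirectSum T J Set.univ)
    (hJ' : IsDirectSum T J' Set.univ) : J = J' := by
  ext z
  induction z using WellFoundedLT.induction with
  | _ z ih =>
    exact ⟨fun hz => hJ.mem_of_forall_lt hJ' hz fun w hw => (ih w hw).2,
      fun hz => hJ'.mem_of_forall_lt hJ hz fun w hw => (ih w hw).1⟩

end Unique

end IsDirectSum

theorem stmt2 {n m : ℕ} (I₁ : Set (Fin n → ℕ)) (I₂ : Set (Fin m → ℕ))
    (J : Set ((Fin n → ℕ) × (Fin m → ℕ)))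
    (h : IsDirectSum (I₁ ×ˢ I₂) J (Set.univ : Set ((Fin n → ℕ) × (Fin m → ℕ)))) :
    ∃ (J₁ : Set (Fin n → ℕ)) (J₂ : Set (Fin m → ℕ)),
      J = J₁ ×ˢ J₂ ∧ IsDirectSum I₁ J₁ Set.univ ∧ IsDirectSum I₂ J₂ Set.univ := by
  obtain ⟨⟨h0I₁, h0I₂⟩, -⟩ := h.zero_mem
  have h₁ := h.fst_slice h0I₂
  have h₂ := h.snd_slice h0I₁
  have hprod := h₁.prod h₂
  rw [Set.univ_prod_univ] at hprod
  exact ⟨_, _, h.right_unique_s2 hprod, h₁, h₂⟩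
end

section
/- Let (T, J) be an ℕ^n-pair, N ≥ 2 an integer, and (C, D) a {0,1,…,N−1}-pair (i.e., C ⊕ D = {0,…,N−1}). Fix a coordinate index j. Define T* = {c·e_j + φ_j^N(t) : c ∈ C, t ∈ T} and J* = {d·e_j + φ_j^N(s) : d ∈ D, s ∈ J}, where φ_j^N multiplies the j-th coordinate by N and leaves other coordinates fixed. Then (T*, J*) is an ℕ^n-pair. -/
/-
Proof idea: the map `(r, y) ↦ r • e_j + φ_j^N y` sends `{0, …, N-1} × ℕ^n` bijectively onto `ℕ^n`
(division with remainder in coordinate `j`) and is additive. So it carries the pair of direct sums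
`{0, …, N-1} = C ⊕ D`, `ℕ^n = T ⊕ J` to the direct sum `ℕ^n = T* ⊕ J*` of the images.
-/

open Pointwise

theorem IsDirectSum.image2 {α β γ : Type*} [Add α] [Add β] [Add γ] {f : α → β → γ}
    (hf : ∀ a b a' b', f a b + f a' b' = f (a + a') (b + b'))
    {A B S : Set α} {T J U : Set β} (hS : IsDirectSum A B S) (hU : IsDirectSum T J U)
    (hinj : Set.InjOn (Function.uncurry f) (S ×ˢ U)) :
    IsDirectSum (Set.image2 f A T) (Set.image2 f B J) (Set.image2 f S U) := by
  obtain ⟨rfl, hABu⟩ := hS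
  obtain ⟨rfl, hTJu⟩ := hU
  refine ⟨Set.Subset.antisymm ?_ ?_, ?_⟩
  · rintro _ ⟨_, ⟨a, ha, b, hb, rfl⟩, _, ⟨t, ht, s, hs, rfl⟩, rfl⟩
    exact ⟨_, ⟨a, ha, t, ht, rfl⟩, _, ⟨b, hb, s, hs, rfl⟩, hf a t b s⟩
  · rintro _ ⟨_, ⟨a, ha, t, ht, rfl⟩, _, ⟨b, hb, s, hs, rfl⟩, rfl⟩
    exact ⟨a + b, Set.add_mem_add ha hb, t + s, Set.add_mem_add ht hs, (hf a t b s).symm⟩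
  · rintro _ ⟨a, ha, t, ht, rfl⟩ _ ⟨b, hb, s, hs, rfl⟩ _ ⟨a', ha', t', ht', rfl⟩
      _ ⟨b', hb', s', hs', rfl⟩ heq
    rw [hf, hf] at heq
    have hsum : (a + b, t + s) = (a' + b', t' + s') :=
      hinj ⟨Set.add_mem_add ha hb, Set.add_mem_add ht hs⟩
        ⟨Set.add_mem_add ha' hb', Set.add_mem_add ht' hs'⟩ heq
    obtain ⟨hab, hts⟩ := Prod.ext_iff.mp hsum
    obtain ⟨rfl, rfl⟩ := hABu a ha b hb a' ha' b' hb' hab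
    obtain ⟨rfl, rfl⟩ := hTJu t ht s hs t' ht' s' hs' hts
    exact ⟨rfl, rfl⟩

section PushDigit

variable {n : ℕ} (j : Fin n) (N : ℕ)

/-- `r • e_j + φ_j^N y` in the paper's notation. -/
def pushDigit (r : ℕ) (y : Fin n → ℕ) : Fin n → ℕ :=
  Pi.single j r + Function.update y j (N * y j)

variable {j N}

@[simp]
theorem pushDigit_apply_self (r : ℕ) (y : Fin n → ℕ) : pushDigit j N r y j = r + N * y j := by
  simp [pushDigit]

theorem pushDigit_apply_of_ne {i : Fin n} (hij : i ≠ j) (r : ℕ) (y : Fin n → ℕ) :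
    pushDigit j N r y i = y i := by
  simp [pushDigit, hij]

theorem pushDigit_add (r y r' y') :
    pushDigit j N r y + pushDigit j N r' y' = pushDigit j N (r + r') (y + y') := by
  funext i
  rcases eq_or_ne i j with rfl | hij
  · simp only [Pi.add_apply, pushDigit_apply_self]
    ring
  · simp only [Pi.add_apply, pushDigit_apply_of_ne hij]

theorem pushDigit_injOn :
    Set.InjOn (Function.uncurry (pushDigit j N)) (Set.Iio N ×ˢ Set.univ) := by
  rintro ⟨r, y⟩ ⟨hr, -⟩ ⟨r', y'⟩ ⟨hr', -⟩ heq
  have hN : 0 < N := (Nat.zero_le r).trans_lt hr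
  have hj : r + N * y j = r' + N * y' j := by
    simpa using congrFun heq j
  obtain ⟨hq, hrem⟩ := (Nat.div_mod_unique hN).mpr ⟨hj, hr⟩
  obtain ⟨hq', hrem'⟩ := (Nat.div_mod_unique hN).mpr ⟨rfl, hr'⟩
  refine Prod.ext (hrem.symm.trans hrem') (funext fun i => ?_)
  rcases eq_or_ne i j with rfl | hij
  · exact hq.symm.trans hq'
  · simpa [pushDigit_apply_of_ne hij] using congrFun heq i

theorem image2_pushDigit_Iio_univ (hN : 0 < N) :
    Set.image2 (pushDigit j N) (Set.Iio N) Set.univ = Set.univ := by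
  refine Set.eq_univ_of_forall fun x =>
    ⟨x j % N, Nat.mod_lt _ hN, Function.update x j (x j / N), trivial, funext fun i => ?_⟩
  rcases eq_or_ne i j with rfl | hij
  · simpa using Nat.mod_add_div (x i) N
  · simp [pushDigit_apply_of_ne hij, hij]

end PushDigit

theorem stmt4 {n : ℕ} (T J : Set (Fin n → ℕ)) (h : IsDirectSum T J Set.univ)
    (N : ℕ) (hN : 2 ≤ N) (C D : Set ℕ) (hCD : IsDirectSum C D (Set.Iio N)) (j : Fin n) :
    IsDirectSum
      {x : Fin n → ℕ | ∃ c ∈ C, ∃ t ∈ T, x = Pi.single j c + Function.update t j (N * t j)}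
      {x : Fin n → ℕ | ∃ d ∈ D, ∃ s ∈ J, x = Pi.single j d + Function.update s j (N * s j)}
      Set.univ := by
  have himage : ∀ (A : Set ℕ) (U : Set (Fin n → ℕ)),
      {x | ∃ a ∈ A, ∃ u ∈ U, x = Pi.single j a + Function.update u j (N * u j)} =
        Set.image2 (pushDigit j N) A U := by
    intro A U
    ext x
    simp only [Set.mem_ofPred_eq, Set.mem_image2, pushDigit, eq_comm]
  rw [himage, himage, ← image2_pushDigit_Iio_univ (j := j) (by omega : 0 < N)]
  exact IsDirectSum.image2 pushDigit_add hCD h pushDigit_injOn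
end

section
/- Let (T, J) be an ℕ^n-pair, m ≥ 2, a ∈ (ℕ\{0})^m, and L_a = ℕ^m \ (ℕ^m + a). Define (substituting the first coordinate by the monomial with exponent vector a and multiplying T by L_a): T* = {ℓ + k·a ⊕ t̄ : ℓ ∈ L_a, (k, t̄) ∈ T with k the first coordinate of t} viewed in ℕ^{m + n − 1}, i.e., T* = L_a ⊕ {(k·a, t̄) : (k, t̄) ∈ T} and J* = {(k·a, s̄) : (k, s̄) ∈ J}. Then (T*, J*) is an ℕ^{n+m−1}-pair. -/
/-!
Every `x ∈ ℕ^m` is uniquely `ℓ + k • a` with `ℓ ∈ L_a`: `k` must be the least quotient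
`x i / a i`, since `ℓ ∉ ℕ^m + a` says exactly that one more copy of `a` cannot be split off.
So `ℕ^m = L_a ⊕ ℕ a` with `k ↦ k • a` injective, and substituting `k • a` for the first
coordinate `k` of `ℕ × ℕ^(n-1) = T ⊕ J` turns this decomposition into `T* ⊕ J*`.
-/

open Pointwise

/-- `L_a = ℕ^m \ (ℕ^m + a)`. -/
def La {m : ℕ} (a : Fin m → ℕ) : Set (Fin m → ℕ) :=
  Set.univ \ {x | ∃ y : Fin m → ℕ, x = y + a}

section DirectSum

variable {M β : Type*} [AddCommMonoid M] [AddCommMonoid β]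

theorem IsDirectSum.prod_nsmul_extension {L : Set M} {a : M}
    (hL : IsDirectSum L (Set.range fun k : ℕ => k • a) Set.univ)
    (ha : Function.Injective fun k : ℕ => k • a) {T J : Set (ℕ × β)}
    (h : IsDirectSum T J Set.univ) :
    IsDirectSum {p : M × β | ∃ ℓ ∈ L, ∃ t ∈ T, p = (ℓ + t.1 • a, t.2)}
      {p : M × β | ∃ s ∈ J, p = (s.1 • a, s.2)} Set.univ := by
  constructor
  · refine (Set.eq_univ_of_forall fun p => ?_).symm
    obtain ⟨ℓ, hℓ, _, ⟨k, rfl⟩, hp⟩ := Set.mem_add.mp (hL.1 ▸ Set.mem_univ p.1)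
    obtain ⟨t, ht, s, hs, hts⟩ := Set.mem_add.mp (h.1 ▸ Set.mem_univ (k, p.2))
    have hk : t.1 + s.1 = k := congrArg Prod.fst hts
    have hsnd : t.2 + s.2 = p.2 := congrArg Prod.snd hts
    refine Set.mem_add.mpr ⟨_, ⟨ℓ, hℓ, t, ht, rfl⟩, _, ⟨s, hs, rfl⟩, Prod.ext ?_ hsnd⟩
    simp only [Prod.fst_add, ← hp, ← hk, add_smul, add_assoc]
  · rintro _ ⟨ℓ, hℓ, t, ht, rfl⟩ _ ⟨s, hs, rfl⟩ _ ⟨ℓ', hℓ', t', ht', rfl⟩ _ ⟨s', hs', rfl⟩ heq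
    simp only [Prod.mk_add_mk, Prod.mk.injEq] at heq
    obtain ⟨hfst, hsnd⟩ := heq
    have hsplit : ℓ + (t.1 + s.1) • a = ℓ' + (t'.1 + s'.1) • a := by
      simpa only [add_smul, add_assoc] using hfst
    obtain ⟨rfl, hk⟩ := hL.2 ℓ hℓ _ ⟨_, rfl⟩ ℓ' hℓ' _ ⟨_, rfl⟩ hsplit
    obtain ⟨rfl, rfl⟩ := h.2 t ht s hs t' ht' s' hs' (Prod.ext (ha hk) hsnd)
    exact ⟨rfl, rfl⟩

end DirectSum

section La

variable {m : ℕ} {a : Fin m → ℕ}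

theorem mem_La_iff {x : Fin m → ℕ} : x ∈ La a ↔ ∃ i, x i < a i := by
  simp only [La, Set.mem_sdiff, Set.mem_univ, Set.mem_ofPred_eq, true_and, not_exists]
  constructor
  · intro hx
    by_contra! hge
    exact hx (x - a) (funext fun i => (Nat.sub_add_cancel (hge i)).symm)
  · rintro ⟨i, hi⟩ y rfl
    simp at hi

theorem le_of_add_nsmul_eq_of_mem_La {ℓ ℓ' : Fin m → ℕ} {k k' : ℕ} (hℓ' : ℓ' ∈ La a)
    (heq : ℓ + k • a = ℓ' + k' • a) : k ≤ k' := by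
  by_contra! hlt
  obtain ⟨d, rfl⟩ := Nat.exists_eq_add_of_lt hlt
  refine hℓ'.2 ⟨ℓ + d • a, add_right_cancel (b := k' • a) ?_⟩
  rw [← heq]
  simp only [add_smul, one_smul]
  abel

theorem uniqueSumsOn_La :
    UniqueSumsOn (La a) (Set.range fun k : ℕ => k • a) := by
  rintro ℓ hℓ _ ⟨k, rfl⟩ ℓ' hℓ' _ ⟨k', rfl⟩ heq
  obtain rfl : k = k' := le_antisymm (le_of_add_nsmul_eq_of_mem_La hℓ' heq)
    (le_of_add_nsmul_eq_of_mem_La hℓ heq.symm)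
  exact ⟨add_right_cancel heq, rfl⟩

theorem exists_mem_La_add_nsmul (hm : 0 < m) (ha : ∀ i, 0 < a i) (x : Fin m → ℕ) :
    ∃ ℓ ∈ La a, ∃ k : ℕ, ℓ + k • a = x := by
  have := Fin.pos_iff_nonempty.mp hm
  obtain ⟨i₀, hmin⟩ := Finite.exists_min fun i => x i / a i
  have hle : ∀ i, x i₀ / a i₀ * a i ≤ x i := fun i =>
    (Nat.mul_le_mul_right _ (hmin i)).trans (Nat.div_mul_le_self _ _)
  refine ⟨x - (x i₀ / a i₀) • a, mem_La_iff.mpr ⟨i₀, ?_⟩, x i₀ / a i₀,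
    funext fun i => Nat.sub_add_cancel (hle i)⟩
  simp only [Pi.sub_apply, Pi.smul_apply, smul_eq_mul, ← Nat.mod_eq_sub_div_mul]
  exact Nat.mod_lt _ (ha i₀)

theorem isDirectSum_La (hm : 0 < m) (ha : ∀ i, 0 < a i) :
    IsDirectSum (La a) (Set.range fun k : ℕ => k • a) Set.univ := by
  refine ⟨(Set.eq_univ_of_forall fun x => ?_).symm, uniqueSumsOn_La⟩
  obtain ⟨ℓ, hℓ, k, rfl⟩ := exists_mem_La_add_nsmul hm ha x
  exact Set.add_mem_add hℓ ⟨k, rfl⟩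

theorem nsmul_left_injective_of_pos (hm : 0 < m) (ha : ∀ i, 0 < a i) :
    Function.Injective fun k : ℕ => k • a := fun _ _ hk =>
  Nat.eq_of_mul_eq_mul_right (ha ⟨0, hm⟩) (congrFun hk ⟨0, hm⟩)

end La

/-- Second type extension (with `δ = 1`): `ℕ^n` is identified with `ℕ × ℕ^(n-1)`
(first coordinate singled out), and `ℕ^(n+m-1)` with `ℕ^m × ℕ^(n-1)`. -/
theorem stmt5 {n' m : ℕ} (hm : 2 ≤ m) (T J : Set (ℕ × (Fin n' → ℕ)))
    (h : IsDirectSum T J Set.univ) (a : Fin m → ℕ) (ha : ∀ i, 0 < a i) :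
    IsDirectSum
      {p : (Fin m → ℕ) × (Fin n' → ℕ) | ∃ ℓ ∈ La a, ∃ t ∈ T, p = (ℓ + t.1 • a, t.2)}
      {p : (Fin m → ℕ) × (Fin n' → ℕ) | ∃ s ∈ J, p = (s.1 • a, s.2)}
      Set.univ :=
  (isDirectSum_La (by omega) ha).prod_nsmul_extension
    (nsmul_left_injective_of_pos (by omega) ha) h
end

section
/- Let n ≥ 2 and let (T, J) be an ℕ^n-pair such that L₀ ⊆ J, where L₀ = {a ∈ ℕ^n : some coordinate of a is 0}. Then T is totally ordered by the strict partial order a < b defined by b − a ∈ (ℕ\{0})^n: for any distinct a, b ∈ T, either a < b or b < a. -/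
open Pointwise

/-! If `a ≠ b` in `T` are not strictly comparable, then `c = a ⊔ b` differs from `a` and
from `b` by points with a zero coordinate, so `c = a + (c - a) = b + (c - b)` would be two
decompositions of `c` in `T ⊕ J`. -/

theorem UniqueSumsOn.eq_of_tsub_mem {α : Type*} [AddCommMonoid α] [PartialOrder α]
    [CanonicallyOrderedAdd α] [Sub α] [OrderedSub α] {A B : Set α} (h : UniqueSumsOn A B)
    {a a' c : α} (ha : a ∈ A) (ha' : a' ∈ A) (hac : a ≤ c) (ha'c : a' ≤ c)
    (hb : c - a ∈ B) (hb' : c - a' ∈ B) : a = a' :=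
  (h a ha _ hb a' ha' _ hb' (by rw [add_tsub_cancel_of_le hac, add_tsub_cancel_of_le ha'c])).1

theorem Pi.sup_tsub_left_apply_eq_zero {ι : Type*} {a b : ι → ℕ} {i : ι} (h : b i ≤ a i) :
    (a ⊔ b - a) i = 0 := by
  simp [h]

theorem stmt8_general {n : ℕ} (T J : Set (Fin n → ℕ))
    (h : IsDirectSum T J Set.univ)
    (hL : {x : Fin n → ℕ | ∃ i, x i = 0} ⊆ J) :
    ∀ a ∈ T, ∀ b ∈ T, a ≠ b → (∀ i, a i < b i) ∨ (∀ i, b i < a i) := by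
  intro a ha b hb hne
  by_contra! hcomp
  obtain ⟨⟨i, hba⟩, ⟨k, hab⟩⟩ := hcomp
  have hsa : a ⊔ b - a ∈ J := hL ⟨i, Pi.sup_tsub_left_apply_eq_zero hba⟩
  have hsb : a ⊔ b - b ∈ J := hL ⟨k, by rw [sup_comm]; exact Pi.sup_tsub_left_apply_eq_zero hab⟩
  exact hne (h.2.eq_of_tsub_mem ha hb le_sup_left le_sup_right hsa hsb)

theorem stmt8 {n : ℕ} (hn : 2 ≤ n) (T J : Set (Fin n → ℕ))
    (h : IsDirectSum T J Set.univ)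
    (hL : {x : Fin n → ℕ | ∃ i, x i = 0} ⊆ J) :
    ∀ a ∈ T, ∀ b ∈ T, a ≠ b → (∀ i, a i < b i) ∨ (∀ i, b i < a i) :=
  stmt8_general T J h hL
end

section
/- If (C, D) is a {0,1,…,N−1}-pair with N ≥ 2, then there exists an integer p ≥ 2 with p dividing N, and a {0,1,…,N/p−1}-pair (C̃, D̃), such that C = pC̃ and D = pD̃ + {0,1,…,p−1}, or the same with the roles of C and D reversed. -/
/-!
Say `1 ∈ D` (otherwise swap `C` and `D`) and let `p` be the least positive element of `C`, or `N`
if there is none. Then `[0, p) ⊆ D`. A strong induction on `n < N`, comparing the decompositions of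
`n - 1` and `n` and using their uniqueness, shows that every element of `C` is a multiple of `p` and
that membership in `D` does not change inside a block `[p k, p k + p)`. So `D` is a union of whole
blocks, `p ∣ N`, and dividing by `p` gives the `[0, N / p)`-pair.
-/

open Pointwise

/-- `p` is the least positive element of `C`, or `N` when `C = {0}` (then `D = [0, N)` is a
single block). -/
structure IsLeastPositiveOr (C : Set ℕ) (N p : ℕ) : Prop where
  pos : 0 < p
  le : p ≤ N
  mem_of_lt : p < N → p ∈ C
  le_of_mem : ∀ c ∈ C, 0 < c → p ≤ c

theorem exists_isLeastPositiveOr (C : Set ℕ) {N : ℕ} (hN : 0 < N) :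
    ∃ p, IsLeastPositiveOr C N p := by
  classical
  have hex : ∃ k, 0 < k ∧ (k ∈ C ∨ k = N) := ⟨N, hN, Or.inr rfl⟩
  obtain ⟨hpos, hmem⟩ := Nat.find_spec hex
  exact ⟨Nat.find hex, hpos, Nat.find_min' hex ⟨hN, Or.inr rfl⟩,
    fun hlt => hmem.resolve_right hlt.ne, fun c hc hc0 => Nat.find_min' hex ⟨hc0, Or.inl hc⟩⟩

/-- The local form, at the integer `n`, of `C = p C'` and `D = p D' + [0, p)`. -/
def BlockShapedAt (C D : Set ℕ) (p n : ℕ) : Prop :=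
  (n ∈ C → p ∣ n) ∧ (n % p ≠ 0 → (n ∈ D ↔ n - 1 ∈ D))

theorem mem_iff_sub_one_of_add_eq {C D : Set ℕ} {p n c d : ℕ}
    (ih : ∀ m < n, BlockShapedAt C D p m) (hn : n % p ≠ 0) (hc : c ∈ C) (hc0 : 0 < c)
    (hd0 : 0 < d) (hcd : c + d = n) : d ∈ D ↔ d - 1 ∈ D := by
  obtain ⟨k, rfl⟩ := (ih c (by omega)).1 hc
  refine (ih d (by omega)).2 ?_
  rwa [← hcd, Nat.mul_add_mod] at hn

namespace IsDirectSum

variable {C D : Set ℕ} {N p n c d k r : ℕ}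

theorem symm {α : Type*} [AddCommSemigroup α] {A B S : Set α} (h : IsDirectSum A B S) :
    IsDirectSum B A S :=
  ⟨h.1.trans (add_comm A B), fun b hb a ha b' hb' a' ha' he =>
    (h.2 a ha b hb a' ha' b' hb' (by rw [add_comm, he, add_comm])).symm⟩

theorem add_lt (h : IsDirectSum C D (Set.Iio N)) (hc : c ∈ C) (hd : d ∈ D) : c + d < N := by
  have : c + d ∈ C + D := Set.add_mem_add hc hd
  rwa [← h.1] at this

theorem exists_add_eq_s12 (h : IsDirectSum C D (Set.Iio N)) (hn : n < N) :
    ∃ c ∈ C, ∃ d ∈ D, c + d = n :=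
  Set.mem_add.1 (h.1 ▸ hn)

theorem zero_mem_s12 (h : IsDirectSum C D (Set.Iio N)) (hN : 0 < N) : 0 ∈ C ∧ 0 ∈ D := by
  obtain ⟨c, hc, d, hd, hcd⟩ := h.exists_add_eq_s12 hN
  obtain ⟨rfl, rfl⟩ : c = 0 ∧ d = 0 := by omega
  exact ⟨hc, hd⟩

theorem one_mem_or (h : IsDirectSum C D (Set.Iio N)) (hN : 1 < N) : 1 ∈ C ∨ 1 ∈ D := by
  obtain ⟨c, hc, d, hd, hcd⟩ := h.exists_add_eq_s12 hN
  obtain ⟨rfl, rfl⟩ | ⟨rfl, rfl⟩ : c = 1 ∧ d = 0 ∨ c = 0 ∧ d = 1 := by omega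
  exacts [Or.inl hc, Or.inr hd]

theorem mem_right_of_lt (h : IsDirectSum C D (Set.Iio N)) (hp : IsLeastPositiveOr C N p)
    (hnp : n < p) : n ∈ D := by
  obtain ⟨c, hc, d, hd, rfl⟩ := h.exists_add_eq_s12 (hnp.trans_le hp.le)
  obtain rfl : c = 0 := by
    by_contra hc0
    have := hp.le_of_mem c hc (Nat.pos_of_ne_zero hc0)
    omega
  simpa using hd

theorem dvd_of_mem_left_of_forall_lt (h : IsDirectSum C D (Set.Iio N))
    (hp : IsLeastPositiveOr C N p) (ih : ∀ m < n, BlockShapedAt C D p m) (hnN : n < N)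
    (hn : n ∈ C) : p ∣ n := by
  rcases Nat.eq_zero_or_pos n with rfl | hn0
  · exact dvd_zero p
  by_contra hdvd
  have hnp : n % p ≠ 0 := fun h0 => hdvd (Nat.dvd_of_mod_eq_zero h0)
  have hpn : p ≤ n := hp.le_of_mem n hn hn0
  have hp0 := hp.pos
  obtain ⟨c, hc, d, hd, hcd⟩ := h.exists_add_eq_s12 (n := n - 1) (by omega)
  rcases Nat.eq_zero_or_pos c with rfl | hc0
  · -- `n + (p - 1) = p + (n - 1)` are two decompositions
    have := h.2 n hn (p - 1) (h.mem_right_of_lt hp (by omega)) p (hp.mem_of_lt (by omega)) d hd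
      (by omega)
    exact hnp (by rw [this.1, Nat.mod_self])
  · have hd1 : d + 1 ∈ D :=
      (mem_iff_sub_one_of_add_eq ih hnp hc hc0 (by omega) (by omega)).2 (by simpa using hd)
    have := h.2 c hc (d + 1) hd1 n hn 0 (h.zero_mem_s12 (by omega)).2 (by omega)
    omega

theorem blockShapedAt_of_forall_lt (h : IsDirectSum C D (Set.Iio N))
    (hp : IsLeastPositiveOr C N p) (ih : ∀ m < n, BlockShapedAt C D p m) (hnN : n < N) :
    BlockShapedAt C D p n := by
  have hdvd := h.dvd_of_mem_left_of_forall_lt hp ih hnN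
  have h0C : 0 ∈ C := (h.zero_mem_s12 (by omega)).1
  refine ⟨hdvd, fun hn => ?_⟩
  have hn0 : 0 < n := Nat.pos_of_ne_zero (by rintro rfl; simp at hn)
  constructor
  · intro hnD
    obtain ⟨c, hc, d, hd, hcd⟩ := h.exists_add_eq_s12 (n := n - 1) (by omega)
    rcases Nat.eq_zero_or_pos c with rfl | hc0
    · simpa [← hcd] using hd
    have hd1 : d + 1 ∈ D :=
      (mem_iff_sub_one_of_add_eq ih hn hc hc0 (by omega) (by omega)).2 (by simpa using hd)
    have := h.2 c hc (d + 1) hd1 0 h0C n hnD (by omega)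
    omega
  · intro hnD
    obtain ⟨c, hc, d, hd, hcd⟩ := h.exists_add_eq_s12 hnN
    rcases Nat.eq_zero_or_pos c with rfl | hc0
    · simpa [← hcd] using hd
    rcases Nat.eq_zero_or_pos d with rfl | hd0
    · exact absurd (Nat.mod_eq_zero_of_dvd (hdvd (by simpa [← hcd] using hc))) hn
    have hd1 := (mem_iff_sub_one_of_add_eq ih hn hc hc0 hd0 hcd).1 hd
    have := h.2 c hc (d - 1) hd1 0 h0C (n - 1) hnD (by omega)
    omega

theorem blockShapedAt (h : IsDirectSum C D (Set.Iio N)) (hp : IsLeastPositiveOr C N p) :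
    ∀ n < N, BlockShapedAt C D p n := by
  intro n
  induction n using Nat.strong_induction_on with
  | _ n ih =>
    intro hnN
    exact h.blockShapedAt_of_forall_lt hp (fun m hm => ih m hm (by omega)) hnN

theorem lt_of_mem_left (h : IsDirectSum C D (Set.Iio N)) (hN : 0 < N) (hc : c ∈ C) : c < N := by
  simpa using h.add_lt hc (h.zero_mem_s12 hN).2

theorem lt_of_mem_right (h : IsDirectSum C D (Set.Iio N)) (hN : 0 < N) (hd : d ∈ D) : d < N := by
  simpa using h.add_lt (h.zero_mem_s12 hN).1 hd

theorem dvd_of_mem_left (h : IsDirectSum C D (Set.Iio N)) (hp : IsLeastPositiveOr C N p)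
    (hc : c ∈ C) : p ∣ c :=
  (h.blockShapedAt hp c (h.lt_of_mem_left (hp.pos.trans_le hp.le) hc)).1 hc

theorem mul_add_mem_right_iff (h : IsDirectSum C D (Set.Iio N)) (hp : IsLeastPositiveOr C N p)
    (hr : r < p) (hN : p * k + r < N) : p * k + r ∈ D ↔ p * k ∈ D := by
  induction r with
  | zero => rfl
  | succ r ih =>
    rw [← ih (by omega) (by omega)]
    exact (h.blockShapedAt hp _ hN).2 (by rw [Nat.mul_add_mod, Nat.mod_eq_of_lt hr]; omega)

theorem mul_add_le (h : IsDirectSum C D (Set.Iio N)) (hp : IsLeastPositiveOr C N p)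
    (hk : p * k ∈ D) : p * k + p ≤ N := by
  rcases hp.le.lt_or_eq with hpN | rfl
  · have := h.add_lt (hp.mem_of_lt hpN) hk
    omega
  · obtain rfl : k = 0 := by
      by_contra hk0
      have := h.lt_of_mem_right hp.pos hk
      have := Nat.le_mul_of_pos_right p (Nat.pos_of_ne_zero hk0)
      omega
    simp

theorem mul_add_mem_right (h : IsDirectSum C D (Set.Iio N)) (hp : IsLeastPositiveOr C N p)
    (hk : p * k ∈ D) (hr : r < p) : p * k + r ∈ D :=
  (h.mul_add_mem_right_iff hp hr (by have := h.mul_add_le hp hk; omega)).2 hk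

theorem left_eq_image (h : IsDirectSum C D (Set.Iio N)) (hp : IsLeastPositiveOr C N p) :
    C = (p * ·) '' ((p * ·) ⁻¹' C) :=
  (Set.image_preimage_eq_of_subset fun _ hc =>
    let ⟨k, hk⟩ := h.dvd_of_mem_left hp hc; ⟨k, hk.symm⟩).symm

theorem right_eq_image_add (h : IsDirectSum C D (Set.Iio N)) (hp : IsLeastPositiveOr C N p) :
    D = (p * ·) '' ((p * ·) ⁻¹' D) + Set.Iio p := by
  ext n
  constructor
  · intro hn
    have hnN : p * (n / p) + n % p < N := by
      rw [Nat.div_add_mod]; exact h.lt_of_mem_right (hp.pos.trans_le hp.le) hn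
    have hk : p * (n / p) ∈ D := by
      rwa [← h.mul_add_mem_right_iff hp (Nat.mod_lt n hp.pos) hnN, Nat.div_add_mod]
    exact ⟨p * (n / p), ⟨n / p, hk, rfl⟩, n % p, Nat.mod_lt n hp.pos, Nat.div_add_mod n p⟩
  · rintro ⟨_, ⟨k, hk, rfl⟩, r, hr, rfl⟩
    exact h.mul_add_mem_right hp hk hr

theorem dvd_length (h : IsDirectSum C D (Set.Iio N)) (hp : IsLeastPositiveOr C N p) : p ∣ N := by
  obtain ⟨c, hc, d, hd, hcd⟩ := h.exists_add_eq_s12 (n := N - 1) (by have := hp.pos; have := hp.le; omega)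
  obtain ⟨j, rfl⟩ := h.dvd_of_mem_left hp hc
  rw [h.right_eq_image_add hp] at hd
  obtain ⟨_, ⟨k, hk, rfl⟩, r, hr, rfl⟩ := hd
  -- the block of `d` is complete, so `N - 1` is the end of a block
  have := h.add_lt hc (h.mul_add_mem_right hp hk (Nat.sub_lt hp.pos one_pos))
  refine ⟨j + k + 1, ?_⟩
  rw [Nat.mul_add, Nat.mul_add, Nat.mul_one]
  simp only [Set.mem_Iio] at hr
  beta_reduce at hcd
  omega

theorem preimage_mul (h : IsDirectSum C D (Set.Iio N)) (hp : IsLeastPositiveOr C N p) :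
    IsDirectSum ((p * ·) ⁻¹' C) ((p * ·) ⁻¹' D) (Set.Iio (N / p)) := by
  refine ⟨?_, fun a ha b hb a' ha' b' hb' he => ?_⟩
  · ext k
    rw [Set.mem_Iio, Nat.lt_div_iff_mul_lt' (h.dvd_length hp)]
    constructor
    · intro hk
      obtain ⟨c, hc, d, hd, hcd⟩ := h.exists_add_eq_s12 hk
      obtain ⟨a, rfl⟩ := h.dvd_of_mem_left hp hc
      obtain ⟨b, rfl⟩ : p ∣ d := (Nat.dvd_add_right ⟨a, rfl⟩).1 (hcd ▸ dvd_mul_right p k)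
      exact ⟨a, hc, b, hd, Nat.eq_of_mul_eq_mul_left hp.pos (by rw [mul_add]; exact hcd)⟩
    · rintro ⟨a, ha, b, hb, rfl⟩
      rw [mul_add]
      exact h.add_lt ha hb
  · have := h.2 _ ha _ hb _ ha' _ hb' (by rw [← mul_add, ← mul_add, he])
    exact ⟨Nat.eq_of_mul_eq_mul_left hp.pos this.1, Nat.eq_of_mul_eq_mul_left hp.pos this.2⟩

theorem exists_mul_of_one_mem_right (h : IsDirectSum C D (Set.Iio N)) (hN : 2 ≤ N)
    (h1 : 1 ∈ D) :
    ∃ p, 2 ≤ p ∧ p ∣ N ∧ ∃ C' D' : Set ℕ, IsDirectSum C' D' (Set.Iio (N / p)) ∧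
      C = (p * ·) '' C' ∧ D = (p * ·) '' D' + Set.Iio p := by
  obtain ⟨p, hp⟩ := exists_isLeastPositiveOr C (by omega : 0 < N)
  have hp2 : 2 ≤ p := by
    by_contra hlt
    obtain rfl : p = 1 := by have := hp.pos; omega
    have h0 := h.zero_mem_s12 (by omega)
    have := h.2 1 (hp.mem_of_lt (by omega)) 0 h0.2 0 h0.1 1 h1 rfl
    omega
  exact ⟨p, hp2, h.dvd_length hp, _, _, h.preimage_mul hp, h.left_eq_image hp, h.right_eq_image_add hp⟩

end IsDirectSum

theorem stmt12 (N : ℕ) (hN : 2 ≤ N) (C D : Set ℕ)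
    (h : IsDirectSum C D (Set.Iio N)) :
    ∃ p : ℕ, 2 ≤ p ∧ p ∣ N ∧ ∃ C' D' : Set ℕ,
      IsDirectSum C' D' (Set.Iio (N / p)) ∧
      ((C = (p * ·) '' C' ∧ D = (p * ·) '' D' + Set.Iio p) ∨
       (D = (p * ·) '' C' ∧ C = (p * ·) '' D' + Set.Iio p)) := by
  rcases h.one_mem_or (by omega) with h1 | h1
  · obtain ⟨p, hp, hpN, C', D', hCD', hD, hC⟩ := h.symm.exists_mul_of_one_mem_right hN h1
    exact ⟨p, hp, hpN, C', D', hCD', Or.inr ⟨hD, hC⟩⟩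
  · obtain ⟨p, hp, hpN, C', D', hCD', hC, hD⟩ := h.exists_mul_of_one_mem_right hN h1
    exact ⟨p, hp, hpN, C', D', hCD', Or.inl ⟨hC, hD⟩⟩
end

section
/- Let (T, J) be an ℕ^n-pair with p·e₁ ∈ T and {0, e₁, 2e₁, …, (p−1)e₁} ⊆ J for some integer p ≥ 2. Then there exists an ℕ^n-pair (T̃, J̃) such that T = {(p·t₁, t₂, …, t_n) : t ∈ T̃} and J = {(j + p·s₁, s₂, …, s_n) : 0 ≤ j ≤ p−1, s ∈ J̃}, with the latter a direct-sum decomposition. -/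
open Pointwise

/-!
Write `e` for the unit vector in direction `i`. The heart of the proof is that, as long as
`x i + 1` is not a multiple of `p`, the decomposition of `x + e` is that of `x` with `e` added
to its `J`-part. This is proved by well-founded induction on `x` for the product order: the
only nontrivial case is `x ∈ J`, where a decomposition `x + e = t + j` with both parts nonzero
contradicts the induction hypothesis, and `x + e ∈ T` is excluded by comparing
`(x + e) + (p - 1) • e` with `p • e + x`. It follows that every element of `T` has `i`-th
coordinate divisible by `p`, and that `J` is invariant under moving the `i`-th coordinate
within a block `{p q, …, p q + p - 1}`; dividing the `i`-th coordinate by `p` then gives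
the pair `(T', J')`.
-/

section DirectSum

variable {α : Type*} [AddCommMonoid α] {T J : Set α}

theorem IsDirectSum.exists_add_eq_s16 (h : IsDirectSum T J Set.univ) (x : α) :
    ∃ t ∈ T, ∃ j ∈ J, t + j = x :=
  Set.mem_add.mp (h.1 ▸ Set.mem_univ x)

theorem IsDirectSum.zero_mem_s16 [Subsingleton (AddUnits α)] (h : IsDirectSum T J Set.univ) :
    (0 : α) ∈ T ∧ (0 : α) ∈ J := by
  obtain ⟨t, ht, j, hj, htj⟩ := h.exists_add_eq_s16 0
  obtain ⟨rfl, rfl⟩ := add_eq_zero.mp htj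
  exact ⟨ht, hj⟩

end DirectSum

section Shift

variable {ι : Type*} [DecidableEq ι] {T J : Set (ι → ℕ)} {i : ι} {p : ℕ}

theorem exists_add_single_one_eq {x : ι → ℕ} (hx : x i ≠ 0) :
    ∃ z : ι → ℕ, z + Pi.single i 1 = x := by
  refine ⟨Function.update x i (x i - 1), funext fun k => ?_⟩
  rcases eq_or_ne k i with rfl | hk
  · simp only [Pi.add_apply, Function.update_self, Pi.single_eq_same]
    omega
  · simp [hk]

variable (T J i p) in
def RightSummandShifts (x : ι → ℕ) : Prop :=
  ¬ p ∣ x i + 1 → ∀ t ∈ T, ∀ j ∈ J, t + j = x → j + Pi.single i 1 ∈ J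

theorem dvd_apply_of_mem_left (h : IsDirectSum T J Set.univ) {t : ι → ℕ} (ht : t ∈ T)
    (hshifts : ∀ z, z + Pi.single i 1 = t → RightSummandShifts T J i p z) : p ∣ t i := by
  by_contra hdvd
  obtain ⟨z, rfl⟩ := exists_add_single_one_eq (x := t) (i := i) fun h0 => by simp [h0] at hdvd
  obtain ⟨t', ht', j', hj', rfl⟩ := h.exists_add_eq_s16 z
  have hshift := hshifts _ rfl (by simpa using hdvd) t' ht' j' hj' rfl
  have hzero := (h.2 _ ht 0 h.zero_mem_s16.2 t' ht' _ hshift (by rw [add_zero, add_assoc])).2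
  simpa using congrFun hzero i

theorem mem_right_of_add_single_mem (h : IsDirectSum T J Set.univ) {z : ι → ℕ}
    (hshifts : RightSummandShifts T J i p z) (hz : ¬ p ∣ z i + 1)
    (hze : z + Pi.single i 1 ∈ J) : z ∈ J := by
  obtain ⟨t', ht', j', hj', rfl⟩ := h.exists_add_eq_s16 z
  have huniq := h.2 0 h.zero_mem_s16.1 _ hze t' ht' _ (hshifts hz t' ht' j' hj' rfl)
    (by rw [zero_add, add_assoc])
  rwa [← huniq.1, zero_add]

theorem add_single_mem_right (h : IsDirectSum T J Set.univ) (hp : 0 < p) (hpT : Pi.single i p ∈ T)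
    (hJ : Pi.single i (p - 1) ∈ J) {x : ι → ℕ} (hxJ : x ∈ J) (hx : ¬ p ∣ x i + 1)
    (hshifts : ∀ y < x, RightSummandShifts T J i p y) : x + Pi.single i 1 ∈ J := by
  obtain ⟨t, ht, j, hj, hsum⟩ := h.exists_add_eq_s16 (x + Pi.single i 1)
  rcases eq_or_ne t 0 with rfl | ht0
  · rwa [← hsum, zero_add]
  rcases eq_or_ne j 0 with rfl | hj0
  · rw [add_zero] at hsum
    subst hsum
    have hswap : x + Pi.single i 1 + Pi.single i (p - 1) = Pi.single i p + x := by
      rw [add_assoc, ← Pi.single_add, add_comm, Nat.add_sub_cancel' hp]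
    have hi := congrFun (h.2 _ ht _ hJ _ hpT _ hxJ hswap).1 i
    simp only [Pi.add_apply, Pi.single_eq_same] at hi
    exact absurd (hi ▸ dvd_refl p) hx
  have htdvd : p ∣ t i := dvd_apply_of_mem_left h ht fun z hz => hshifts z <| by
    have hzj : z + j = x := add_right_cancel (by rw [add_right_comm, hz, hsum])
    exact hzj ▸ lt_add_of_pos_right z (pos_iff_ne_zero.mpr hj0)
  have hsum_i : t i + j i = x i + 1 := by simpa using congrFun hsum i
  have hjdvd : ¬ p ∣ j i := by rwa [← Nat.dvd_add_right htdvd, hsum_i]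
  obtain ⟨y, rfl⟩ := exists_add_single_one_eq (x := j) (i := i) fun h0 => by simp [h0] at hjdvd
  have hyx : t + y = x := add_right_cancel (by rw [add_assoc]; exact hsum)
  have hy : y ∈ J := mem_right_of_add_single_mem h
    (hshifts y (hyx ▸ lt_add_of_pos_left y (pos_iff_ne_zero.mpr ht0))) (by simpa using hjdvd) hj
  exact absurd (h.2 t ht y hy 0 h.zero_mem_s16.1 x hxJ (by rw [hyx, zero_add])).1 ht0

theorem IsDirectSum.rightSummandShifts [Finite ι] (h : IsDirectSum T J Set.univ) (hp : 2 ≤ p)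
    (hpT : Pi.single i p ∈ T) (hJ : ∀ k < p, Pi.single i k ∈ J) (x : ι → ℕ) :
    RightSummandShifts T J i p x := by
  induction x using WellFoundedLT.induction with
  | _ x hshifts =>
  intro hx t ht j hj hsum
  rcases eq_or_ne j 0 with rfl | hj0
  · simpa using hJ 1 (by omega)
  rcases eq_or_ne t 0 with rfl | ht0
  · rw [zero_add] at hsum
    subst hsum
    exact add_single_mem_right h (by omega) hpT (hJ _ (by omega)) hj hx hshifts
  have htx : t < x := hsum ▸ lt_add_of_pos_right t (pos_iff_ne_zero.mpr hj0)
  have hjx : j < x := hsum ▸ lt_add_of_pos_left j (pos_iff_ne_zero.mpr ht0)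
  have htdvd : p ∣ t i := dvd_apply_of_mem_left h ht fun z hz =>
    hshifts z (lt_of_lt_of_le (hz ▸ lt_add_of_pos_right z (by simp)) htx.le)
  have hjdvd : ¬ p ∣ j i + 1 := by
    rwa [← Nat.dvd_add_right htdvd, ← add_assoc, ← Pi.add_apply, hsum]
  exact hshifts j hjx hjdvd 0 h.zero_mem_s16.1 j hj (zero_add j)

theorem mem_right_iff_add_single_mem (h : IsDirectSum T J Set.univ)
    (hshifts : ∀ x, RightSummandShifts T J i p x) {y : ι → ℕ} (hy : p ∣ y i) {k : ℕ}
    (hk : k < p) :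
    y ∈ J ↔ y + Pi.single i k ∈ J := by
  induction k with
  | zero => simp
  | succ k ih =>
    have hnd : ¬ p ∣ (y + Pi.single i k : ι → ℕ) i + 1 := by
      simpa [add_assoc, Nat.dvd_add_right hy] using Nat.not_dvd_of_pos_of_lt k.succ_pos hk
    rw [ih (by omega), Pi.single_add, ← add_assoc]
    exact ⟨fun hm => hshifts _ hnd 0 h.zero_mem_s16.1 _ hm (zero_add _),
      mem_right_of_add_single_mem h (hshifts _) hnd⟩

end Shift

section ScaleAt

variable {ι : Type*} [DecidableEq ι] {i : ι} {p : ℕ}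

def scaleAt (p : ℕ) (i : ι) (x : ι → ℕ) : ι → ℕ :=
  Function.update x i (p * x i)

@[simp]
theorem scaleAt_apply_self (x : ι → ℕ) : scaleAt p i x i = p * x i :=
  Function.update_self ..

@[simp]
theorem scaleAt_apply_of_ne (x : ι → ℕ) {k : ι} (hk : k ≠ i) : scaleAt p i x k = x k :=
  Function.update_of_ne hk ..

theorem scaleAt_add (x y : ι → ℕ) : scaleAt p i (x + y) = scaleAt p i x + scaleAt p i y := by
  ext k
  rcases eq_or_ne k i with rfl | hk
  · simp [mul_add]
  · simp [hk]

theorem scaleAt_injective (hp : p ≠ 0) : Function.Injective (scaleAt p i) := by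
  intro x y hxy
  ext k
  have hk := congrFun hxy k
  rcases eq_or_ne k i with rfl | hne
  · simpa [hp] using hk
  · simpa [hne] using hk

theorem mem_range_scaleAt_iff {x : ι → ℕ} : x ∈ Set.range (scaleAt p i) ↔ p ∣ x i := by
  refine ⟨?_, fun ⟨q, hq⟩ => ⟨Function.update x i q, ?_⟩⟩
  · rintro ⟨y, rfl⟩
    simp
  · ext k
    rcases eq_or_ne k i with rfl | hk
    · simp [hq]
    · simp [hk]

theorem single_mod_add_scaleAt_div (x : ι → ℕ) :
    Pi.single i (x i % p) + scaleAt p i (Function.update x i (x i / p)) = x := by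
  ext k
  rcases eq_or_ne k i with rfl | hk
  · simp [Nat.mod_add_div]
  · simp [hk]

theorem eq_of_single_add_scaleAt_eq {k k' : ℕ} (hk : k < p) (hk' : k' < p) {y y' : ι → ℕ}
    (heq : Pi.single i k + scaleAt p i y = Pi.single i k' + scaleAt p i y') :
    k = k' ∧ y = y' := by
  have hi : k + p * y i = k' + p * y' i := by simpa using congrFun heq i
  have hkk' : k = k' := by
    simpa [Nat.mod_eq_of_lt hk, Nat.mod_eq_of_lt hk'] using congrArg (· % p) hi
  subst hkk'
  exact ⟨rfl, scaleAt_injective (by omega) (add_left_cancel heq)⟩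

variable {T J : Set (ι → ℕ)}

theorem isDirectSum_preimage_scaleAt (hp : p ≠ 0) (h : IsDirectSum T J Set.univ)
    (hT : ∀ t ∈ T, p ∣ t i) :
    IsDirectSum (scaleAt p i ⁻¹' T) (scaleAt p i ⁻¹' J) Set.univ := by
  refine ⟨(Set.eq_univ_of_forall fun x => ?_).symm, ?_⟩
  · obtain ⟨t, ht, j, hj, hsum⟩ := h.exists_add_eq_s16 (scaleAt p i x)
    have hjdvd : p ∣ j i := by
      rw [← Nat.dvd_add_right (hT t ht), ← Pi.add_apply, hsum, scaleAt_apply_self]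
      exact dvd_mul_right p _
    obtain ⟨a, rfl⟩ := mem_range_scaleAt_iff.mpr (hT t ht)
    obtain ⟨b, rfl⟩ := mem_range_scaleAt_iff.mpr hjdvd
    exact ⟨a, ht, b, hj, scaleAt_injective hp (by rw [scaleAt_add, hsum])⟩
  · intro a ha b hb a' ha' b' hb' hab
    have huniq := h.2 _ ha _ hb _ ha' _ hb' (by rw [← scaleAt_add, ← scaleAt_add, hab])
    exact ⟨scaleAt_injective hp huniq.1, scaleAt_injective hp huniq.2⟩

theorem isDirectSum_digits_image_preimage_scaleAt (hp : p ≠ 0)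
    (hJ : ∀ y : ι → ℕ, p ∣ y i → ∀ k < p, (y ∈ J ↔ y + Pi.single i k ∈ J)) :
    IsDirectSum {x | ∃ k < p, x = Pi.single i k} (scaleAt p i '' (scaleAt p i ⁻¹' J)) J := by
  refine ⟨Set.ext fun x => ⟨fun hx => ?_, ?_⟩, ?_⟩
  · set y := Function.update x i (x i / p)
    have hdecomp := single_mod_add_scaleAt_div (p := p) (i := i) x
    have hmod : x i % p < p := Nat.mod_lt _ (Nat.pos_of_ne_zero hp)
    have hy : scaleAt p i y ∈ J := by
      rwa [hJ _ (by simp) _ hmod, add_comm, hdecomp]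
    exact Set.mem_add.mpr ⟨_, ⟨_, hmod, rfl⟩, _, ⟨y, hy, rfl⟩, hdecomp⟩
  · rintro ⟨_, ⟨k, hk, rfl⟩, _, ⟨y, hy, rfl⟩, rfl⟩
    simpa only [add_comm (scaleAt p i y)] using (hJ _ (by simp) k hk).mp hy
  · rintro _ ⟨k, hk, rfl⟩ _ ⟨y, -, rfl⟩ _ ⟨k', hk', rfl⟩ _ ⟨y', -, rfl⟩ heq
    obtain ⟨rfl, rfl⟩ := eq_of_single_add_scaleAt_eq hk hk' heq
    exact ⟨rfl, rfl⟩

end ScaleAt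

theorem stmt16 {n : ℕ} (hn : 0 < n) (T J : Set (Fin n → ℕ))
    (h : IsDirectSum T J Set.univ) (p : ℕ) (hp : 2 ≤ p)
    (hpT : Pi.single (⟨0, hn⟩ : Fin n) p ∈ T)
    (hJ : ∀ j < p, Pi.single (⟨0, hn⟩ : Fin n) j ∈ J) :
    ∃ T' J' : Set (Fin n → ℕ), IsDirectSum T' J' Set.univ ∧
      T = (fun t => Function.update t (⟨0, hn⟩ : Fin n) (p * t (⟨0, hn⟩ : Fin n))) '' T' ∧
      IsDirectSum {x : Fin n → ℕ | ∃ j < p, x = Pi.single (⟨0, hn⟩ : Fin n) j}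
        ((fun s => Function.update s (⟨0, hn⟩ : Fin n) (p * s (⟨0, hn⟩ : Fin n))) '' J')
        J := by
  have hshifts := h.rightSummandShifts hp hpT hJ
  have hT : ∀ t ∈ T, p ∣ t ⟨0, hn⟩ := fun t ht =>
    dvd_apply_of_mem_left h ht fun z _ => hshifts z
  have hp0 : p ≠ 0 := by omega
  exact ⟨scaleAt p ⟨0, hn⟩ ⁻¹' T, scaleAt p ⟨0, hn⟩ ⁻¹' J,
    isDirectSum_preimage_scaleAt hp0 h hT,
    (Set.image_preimage_eq_of_subset fun t ht => mem_range_scaleAt_iff.mpr (hT t ht)).symm,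
    isDirectSum_digits_image_preimage_scaleAt hp0
      fun y hy k hk => mem_right_iff_add_single_mem h hshifts hy hk⟩
end
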